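/- Magnitude preservation of the tree: for N = 2^L and any unit-norm c ∈ ℂ^N, with split angles chosen by the subtree-norm rule α_{ℓ,i} = atan2(r_{ℓ+1,2i}, r_{ℓ+1,2i−1}), the vector y = V_mag(α) e₁ satisfies |y_n| = |c_n| for all n = 1,…,N. -/

import Mathlib

open Matrix Complex

/-- Embedded 2×2 splitter: identity on `ℂ^N` except on the (0-based) rows/columns
`{m, n}`, where the principal 2×2 block is `[[cos α, i sin α], [i sin α, cos α]]`. -/
noncomputable def UsubN (N m n : ℕ) (α : ℝ) : Matrix (Fin N) (Fin N) ℂ :=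
  Matrix.of fun u v =>
    if ((u : ℕ) = m ∧ (v : ℕ) = m) ∨ ((u : ℕ) = n ∧ (v : ℕ) = n) then (Real.cos α : ℂ)
    else if ((u : ℕ) = m ∧ (v : ℕ) = n) ∨ ((u : ℕ) = n ∧ (v : ℕ) = m) then
      Complex.I * Real.sin α
    else if u = v then 1 else 0

/-- 0-based entry index of node `(ℓ, i)` (with 1-based `ℓ, i`):
`p(ℓ,i) − 1 = (i−1)·2^{L−ℓ+1}`. -/
def pIdx (L ℓ i : ℕ) : ℕ := (i - 1) * 2 ^ (L + 1 - ℓ)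

/-- 0-based split-partner index of node `(ℓ, i)`: `q(ℓ,i) − 1 = p(ℓ,i) − 1 + 2^{L−ℓ}`. -/
def qIdx (L ℓ i : ℕ) : ℕ := pIdx L ℓ i + 2 ^ (L - ℓ)

/-- Layer matrix `U_ℓ`: the (commuting) product over `i = 1,…,2^{ℓ−1}` of the embedded
splitters `U_{p(ℓ,i), q(ℓ,i)}(α_{ℓ,i})`. -/
noncomputable def layerU (L : ℕ) (α : ℕ → ℕ → ℝ) (ℓ : ℕ) :
    Matrix (Fin (2 ^ L)) (Fin (2 ^ L)) ℂ :=
  (List.ofFn fun i : Fin (2 ^ (ℓ - 1)) =>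
    UsubN (2 ^ L) (pIdx L ℓ ((i : ℕ) + 1)) (qIdx L ℓ ((i : ℕ) + 1)) (α ℓ ((i : ℕ) + 1))).prod

/-- Magnitude-tree unitary `V_mag(α) = U_L · U_{L−1} ⋯ U_1`. -/
noncomputable def Vmag (L : ℕ) (α : ℕ → ℕ → ℝ) :
    Matrix (Fin (2 ^ L)) (Fin (2 ^ L)) ℂ :=
  (List.ofFn fun ℓ : Fin L => layerU L α (L - (ℓ : ℕ))).prod

/-- First standard basis vector `e₁` of `ℂ^N` (0-based index `0`). -/
def e1 (N : ℕ) : Fin N → ℂ := fun j => if (j : ℕ) = 0 then 1 else 0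

/-- `atan2 y x` for `x, y ≥ 0` (angle in `[0, π/2]`), via the complex argument. -/
noncomputable def atan2 (y x : ℝ) : ℝ := Complex.arg ((x : ℂ) + (y : ℂ) * Complex.I)

/-- Subtree norm `r_{ℓ,i}` of `c ∈ ℂ^{2^L}` (0-based entries) over the contiguous
dyadic block of 0-based indices `[(i−1)·2^{L+1−ℓ}, i·2^{L+1−ℓ})` (1-based `ℓ, i`). -/
noncomputable def rnorm (L : ℕ) (c : Fin (2 ^ L) → ℂ) (ℓ i : ℕ) : ℝ :=
  Real.sqrt (∑ n : Fin (2 ^ L),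
    if (i - 1) * 2 ^ (L + 1 - ℓ) ≤ (n : ℕ) ∧ (n : ℕ) < i * 2 ^ (L + 1 - ℓ)
    then ‖c n‖ ^ 2 else 0)

/-- Split-programming rule: `α_{ℓ,i} = atan2(r_{ℓ+1,2i}, r_{ℓ+1,2i−1})`
(set to `0` when `r_{ℓ,i} = 0`). -/
noncomputable def splitAngle (L : ℕ) (c : Fin (2 ^ L) → ℂ) (ℓ i : ℕ) : ℝ :=
  if rnorm L c ℓ i = 0 then 0
  else atan2 (rnorm L c (ℓ + 1) (2 * i)) (rnorm L c (ℓ + 1) (2 * i - 1))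

/-- Output phase-bank rule: `ϑ_n = arg c_n − (π/2)·w_n`, where `w_n` is the Hamming
weight of the binary expansion of `n − 1` (0-based index `n`). -/
noncomputable def phaseChoice (L : ℕ) (c : Fin (2 ^ L) → ℂ) (n : Fin (2 ^ L)) : ℝ :=
  (c n).arg - Real.pi / 2 * ((Nat.digits 2 (n : ℕ)).sum : ℝ)

/-!
After `ℓ` layers the state is supported on the left endpoints `j · 2^(L-ℓ)` of the dyadic
blocks of level `ℓ + 1`, where its modulus is the block norm `r_{ℓ+1,j+1}`. The splitters of
layer `ℓ + 1` act on disjoint index pairs `(p, q)`, `p` the left endpoint of a block and `q` its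
midpoint; the state vanishes at `q`, so the outputs at `p` and `q` have moduli `r cos α` and
`r sin α`. Since `r² = r₁² + r₂²` for the two children, the atan2 rule makes these `r₁` and `r₂`.
At `ℓ = L` the blocks are single entries and `r_{L+1,n+1} = |c n|`.
-/

namespace Matrix

variable {n R : Type*} [DecidableEq n] [Semiring R]

def ActsWithin (M : Matrix n n R) (S : Set n) : Prop :=
  ∀ u v, (u ∉ S ∨ v ∉ S) → M u v = (1 : Matrix n n R) u v

namespace ActsWithin

variable {M A B : Matrix n n R} {S T : Set n}

theorem one (S : Set n) : ActsWithin (1 : Matrix n n R) S := fun _ _ _ => rfl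

theorem mono (h : ActsWithin M S) (hST : S ⊆ T) : ActsWithin M T :=
  fun u v huv => h u v (huv.imp (mt (@hST u)) (mt (@hST v)))

theorem row_eq (h : ActsWithin M S) {u : n} (hu : u ∉ S) : M u = (1 : Matrix n n R) u :=
  funext fun v => h u v (Or.inl hu)

variable [Fintype n]

theorem mulVec_apply_of_notMem (h : ActsWithin M S) {u : n} (hu : u ∉ S) (w : n → R) :
    (M *ᵥ w) u = w u := by
  rw [mulVec, h.row_eq hu, ← mulVec, one_mulVec]

theorem mulVec_apply_congr (h : ActsWithin M S) {u : n} (hu : u ∈ S) {w w' : n → R}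
    (hw : ∀ v ∈ S, w v = w' v) : (M *ᵥ w) u = (M *ᵥ w') u := by
  refine Finset.sum_congr rfl fun v _ => ?_
  by_cases hv : v ∈ S
  · rw [hw v hv]
  · have huv : u ≠ v := by rintro rfl; exact hv hu
    simp only [h u v (Or.inr hv), one_apply_ne huv, zero_mul]

theorem mul (hA : ActsWithin A S) (hB : ActsWithin B T) : ActsWithin (A * B) (S ∪ T) := by
  rintro u v (hu | hv)
  · rw [Set.mem_union, not_or] at hu
    rw [mul_apply, ← hB u v (Or.inl hu.2), hA.row_eq hu.1, ← mul_apply, Matrix.one_mul]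
  · rw [Set.mem_union, not_or] at hv
    have hB' : ∀ x, B x v = (1 : Matrix n n R) x v := fun x => hB x v (Or.inr hv.2)
    simp only [mul_apply, hB']
    rw [← mul_apply, Matrix.mul_one, hA u v (Or.inr hv.1)]

theorem list_prod_ofFn {k : ℕ} {M : Fin k → Matrix n n R} {S : Fin k → Set n}
    (h : ∀ i, ActsWithin (M i) (S i)) : ActsWithin (List.ofFn M).prod (⋃ i, S i) := by
  induction k with
  | zero => exact one _
  | succ k ih =>
    rw [List.ofFn_succ, List.prod_cons]
    refine ((h 0).mul (ih fun i => h i.succ)).mono (Set.union_subset ?_ ?_)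
    · exact Set.subset_iUnion S 0
    · exact Set.iUnion_subset fun i => Set.subset_iUnion S i.succ

theorem list_prod_ofFn_mulVec_apply {k : ℕ} {M : Fin k → Matrix n n R} {S : Fin k → Set n}
    (h : ∀ i, ActsWithin (M i) (S i)) (hS : Pairwise fun i j => Disjoint (S i) (S j))
    {j : Fin k} {u : n} (hu : u ∈ S j) (w : n → R) :
    ((List.ofFn M).prod *ᵥ w) u = (M j *ᵥ w) u := by
  induction k with
  | zero => exact j.elim0
  | succ k ih =>
    rw [List.ofFn_succ, List.prod_cons, ← mulVec_mulVec]
    have hrest := list_prod_ofFn fun i => h i.succ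
    cases j using Fin.cases with
    | zero =>
      refine (h 0).mulVec_apply_congr hu fun v hv => hrest.mulVec_apply_of_notMem ?_ w
      simp only [Set.mem_iUnion, not_exists]
      exact fun i hvi => (hS (Fin.succ_ne_zero i).symm).ne_of_mem hv hvi rfl
    | succ j =>
      rw [(h 0).mulVec_apply_of_notMem fun hu0 => (hS (Fin.succ_ne_zero j)).ne_of_mem hu hu0 rfl]
      exact ih (fun i => h i.succ) (hS.comp_of_injective (Fin.succ_injective k)) hu

end ActsWithin
end Matrix

theorem actsWithin_UsubN (N m n : ℕ) (α : ℝ) :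
    (UsubN N m n α).ActsWithin {u | (u : ℕ) = m ∨ (u : ℕ) = n} := by
  intro u v huv
  simp only [Set.mem_ofPred_eq] at huv
  simp only [UsubN, of_apply, one_apply]
  split_ifs <;> first | rfl | omega

theorem UsubN_mulVec_apply_fst {N m n : ℕ} {u v : Fin N} (hu : (u : ℕ) = m) (hv : (v : ℕ) = n)
    (huv : u ≠ v) (α : ℝ) (w : Fin N → ℂ) :
    (UsubN N m n α *ᵥ w) u = Real.cos α * w u + I * Real.sin α * w v := by
  have hmn : m ≠ n := by rw [← hu, ← hv]; exact Fin.val_ne_of_ne huv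
  rw [mulVec, dotProduct, Fintype.sum_eq_add u v huv]
  · simp [UsubN, hu, hv, hmn, Ne.symm hmn]
  · intro x ⟨hxu, hxv⟩
    have : (x : ℕ) ≠ m := hu ▸ Fin.val_ne_of_ne hxu
    have : (x : ℕ) ≠ n := hv ▸ Fin.val_ne_of_ne hxv
    simp [UsubN, *, Ne.symm hxu]

theorem UsubN_mulVec_apply_snd {N m n : ℕ} {u v : Fin N} (hu : (u : ℕ) = m) (hv : (v : ℕ) = n)
    (huv : u ≠ v) (α : ℝ) (w : Fin N → ℂ) :
    (UsubN N m n α *ᵥ w) v = I * Real.sin α * w u + Real.cos α * w v := by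
  have hmn : m ≠ n := by rw [← hu, ← hv]; exact Fin.val_ne_of_ne huv
  rw [mulVec, dotProduct, Fintype.sum_eq_add u v huv]
  · simp [UsubN, hu, hv, hmn, Ne.symm hmn]
  · intro x ⟨hxu, hxv⟩
    have : (x : ℕ) ≠ m := hu ▸ Fin.val_ne_of_ne hxu
    have : (x : ℕ) ≠ n := hv ▸ Fin.val_ne_of_ne hxv
    simp [UsubN, *, Ne.symm hxv]

theorem sqrt_mul_cos_atan2 (x y : ℝ) : √(x ^ 2 + y ^ 2) * Real.cos (atan2 y x) = x := by
  rw [atan2, ← norm_add_mul_I, norm_mul_cos_arg]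
  simp

theorem sqrt_mul_sin_atan2 (x y : ℝ) : √(x ^ 2 + y ^ 2) * Real.sin (atan2 y x) = y := by
  rw [atan2, ← norm_add_mul_I, norm_mul_sin_arg]
  simp

theorem ite_and_lt_eq_add {a b c n : ℕ} (hab : a ≤ b) (hbc : b ≤ c) (x : ℝ) :
    (if a ≤ n ∧ n < c then x else 0) =
      (if a ≤ n ∧ n < b then x else 0) + (if b ≤ n ∧ n < c then x else 0) := by
  split_ifs <;> first | (exfalso; omega) | simp

theorem rnorm_nonneg (L : ℕ) (c : Fin (2 ^ L) → ℂ) (ℓ i : ℕ) : 0 ≤ rnorm L c ℓ i :=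
  Real.sqrt_nonneg _

theorem rnorm_sq (L : ℕ) (c : Fin (2 ^ L) → ℂ) (ℓ i : ℕ) :
    rnorm L c ℓ i ^ 2 = ∑ n : Fin (2 ^ L),
      if (i - 1) * 2 ^ (L + 1 - ℓ) ≤ (n : ℕ) ∧ (n : ℕ) < i * 2 ^ (L + 1 - ℓ)
      then ‖c n‖ ^ 2 else 0 :=
  Real.sq_sqrt (Finset.sum_nonneg fun _ _ => by positivity)

theorem rnorm_one_one {L : ℕ} {c : Fin (2 ^ L) → ℂ} (hc : ∑ n, ‖c n‖ ^ 2 = 1) :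
    rnorm L c 1 1 = 1 := by
  rw [rnorm, ← Real.sqrt_one, ← hc]
  congr 1
  refine Finset.sum_congr rfl fun n _ => if_pos ⟨by simp, ?_⟩
  simp

theorem rnorm_leaf (L : ℕ) (c : Fin (2 ^ L) → ℂ) (n : Fin (2 ^ L)) :
    rnorm L c (L + 1) (n + 1) = ‖c n‖ := by
  rw [rnorm, ← Real.sqrt_sq (norm_nonneg (c n))]
  congr 1
  rw [← Fintype.sum_ite_eq' n fun m => ‖c m‖ ^ 2]
  refine Finset.sum_congr rfl fun m _ => ?_
  simp only [Nat.sub_self, pow_zero, mul_one, Nat.add_sub_cancel, ← Fin.val_inj]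
  congr 1
  apply propext
  omega

theorem rnorm_sq_eq_add {L ℓ : ℕ} (hℓ : ℓ < L) (c : Fin (2 ^ L) → ℂ) (j : ℕ) :
    rnorm L c (ℓ + 1) (j + 1) ^ 2 =
      rnorm L c (ℓ + 2) (2 * j + 1) ^ 2 + rnorm L c (ℓ + 2) (2 * j + 2) ^ 2 := by
  obtain ⟨d, rfl⟩ : ∃ d, L = ℓ + 1 + d := ⟨L - (ℓ + 1), by omega⟩
  have hd₁ : ℓ + 1 + d + 1 - (ℓ + 1) = d + 1 := by omega
  have hd₂ : ℓ + 1 + d + 1 - (ℓ + 2) = d := by omega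
  have hlo : (j + 1 - 1) * 2 ^ (d + 1) = (2 * j + 1 - 1) * 2 ^ d := by
    simp only [Nat.add_sub_cancel, pow_succ]; ring
  have hhi : (j + 1) * 2 ^ (d + 1) = (2 * j + 2) * 2 ^ d := by ring
  have hmid : 2 * j + 2 - 1 = 2 * j + 1 := rfl
  simp only [rnorm_sq, hd₁, hd₂, ← Finset.sum_add_distrib, hlo, hhi, hmid]
  refine Finset.sum_congr rfl fun n _ => ite_and_lt_eq_add ?_ ?_ _ <;> gcongr <;> omega

theorem rnorm_eq_sqrt {L ℓ : ℕ} (hℓ : ℓ < L) (c : Fin (2 ^ L) → ℂ) (j : ℕ) :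
    rnorm L c (ℓ + 1) (j + 1) =
      √(rnorm L c (ℓ + 2) (2 * j + 1) ^ 2 + rnorm L c (ℓ + 2) (2 * j + 2) ^ 2) := by
  rw [← rnorm_sq_eq_add hℓ]
  exact (Real.sqrt_sq (Real.sqrt_nonneg _)).symm

/-- The convention `α = 0` at `r = 0` is harmless: then both children vanish and
`atan2 0 0 = arg 0 = 0`. -/
theorem splitAngle_eq_atan2 {L ℓ : ℕ} (hℓ : ℓ < L) (c : Fin (2 ^ L) → ℂ) (j : ℕ) :
    splitAngle L c (ℓ + 1) (j + 1) =
      atan2 (rnorm L c (ℓ + 2) (2 * j + 2)) (rnorm L c (ℓ + 2) (2 * j + 1)) := by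
  rw [splitAngle, show 2 * (j + 1) - 1 = 2 * j + 1 by omega, show 2 * (j + 1) = 2 * j + 2 by ring]
  split_ifs with h
  · rw [rnorm_eq_sqrt hℓ, Real.sqrt_eq_zero'] at h
    obtain ⟨h₁, h₂⟩ := (add_eq_zero_iff_of_nonneg (sq_nonneg _) (sq_nonneg _)).1
      (h.antisymm (by positivity))
    simp [atan2, pow_eq_zero_iff two_ne_zero |>.1 h₁, pow_eq_zero_iff two_ne_zero |>.1 h₂]
  · rfl

theorem rnorm_mul_cos_splitAngle {L ℓ : ℕ} (hℓ : ℓ < L) (c : Fin (2 ^ L) → ℂ) (j : ℕ) :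
    rnorm L c (ℓ + 1) (j + 1) * Real.cos (splitAngle L c (ℓ + 1) (j + 1)) =
      rnorm L c (ℓ + 2) (2 * j + 1) := by
  rw [splitAngle_eq_atan2 hℓ, rnorm_eq_sqrt hℓ, sqrt_mul_cos_atan2]

theorem rnorm_mul_sin_splitAngle {L ℓ : ℕ} (hℓ : ℓ < L) (c : Fin (2 ^ L) → ℂ) (j : ℕ) :
    rnorm L c (ℓ + 1) (j + 1) * Real.sin (splitAngle L c (ℓ + 1) (j + 1)) =
      rnorm L c (ℓ + 2) (2 * j + 2) := by
  rw [splitAngle_eq_atan2 hℓ, rnorm_eq_sqrt hℓ, sqrt_mul_sin_atan2]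

theorem pIdx_succ {L ℓ : ℕ} (hℓ : ℓ < L) (j : ℕ) :
    pIdx L (ℓ + 1) (j + 1) = 2 ^ (L - (ℓ + 1)) * (2 * j) := by
  rw [pIdx, Nat.add_sub_cancel, show L + 1 - (ℓ + 1) = L - (ℓ + 1) + 1 by omega, pow_succ]
  ring

theorem qIdx_succ {L ℓ : ℕ} (hℓ : ℓ < L) (j : ℕ) :
    qIdx L (ℓ + 1) (j + 1) = 2 ^ (L - (ℓ + 1)) * (2 * j + 1) := by
  rw [qIdx, pIdx_succ hℓ]
  ring

theorem two_pow_eq_mul {L ℓ : ℕ} (hℓ : ℓ < L) : 2 ^ L = 2 ^ (L - (ℓ + 1)) * (2 * 2 ^ ℓ) := by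
  rw [← pow_succ', ← pow_add]
  congr 1
  omega

theorem pIdx_lt_qIdx (L ℓ i : ℕ) : pIdx L ℓ i < qIdx L ℓ i :=
  Nat.lt_add_of_pos_right (by positivity)

theorem qIdx_lt {L ℓ : ℕ} (hℓ : ℓ < L) {j : ℕ} (hj : j < 2 ^ ℓ) :
    qIdx L (ℓ + 1) (j + 1) < 2 ^ L := by
  rw [qIdx_succ hℓ, two_pow_eq_mul hℓ]
  exact Nat.mul_lt_mul_of_pos_left (by omega) (by positivity)

theorem pIdx_succ_eq_two_pow_mul (L ℓ j : ℕ) : pIdx L (ℓ + 1) (j + 1) = 2 ^ (L - ℓ) * j := by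
  rw [pIdx, Nat.add_sub_cancel, Nat.add_sub_add_right, mul_comm]

theorem not_two_pow_dvd_qIdx {L ℓ : ℕ} (hℓ : ℓ < L) (j : ℕ) :
    ¬ 2 ^ (L - ℓ) ∣ qIdx L (ℓ + 1) (j + 1) := by
  rw [qIdx, pIdx_succ_eq_two_pow_mul, Nat.dvd_add_right (dvd_mul_right _ _),
    Nat.pow_dvd_pow_iff_le_right one_lt_two]
  omega

theorem disjoint_layer_supports {L ℓ : ℕ} (hℓ : ℓ < L) {i j : ℕ} (hij : i ≠ j) :
    Disjoint
      {u : Fin (2 ^ L) | (u : ℕ) = pIdx L (ℓ + 1) (i + 1) ∨ (u : ℕ) = qIdx L (ℓ + 1) (i + 1)}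
      {u : Fin (2 ^ L) | (u : ℕ) = pIdx L (ℓ + 1) (j + 1) ∨ (u : ℕ) = qIdx L (ℓ + 1) (j + 1)} := by
  rw [Set.disjoint_left]
  intro u hi hj
  simp only [Set.mem_ofPred_eq, pIdx_succ hℓ, qIdx_succ hℓ] at hi hj
  have hE : 0 < 2 ^ (L - (ℓ + 1)) := by positivity
  rcases hi with hi | hi <;> rcases hj with hj | hj <;>
    have := Nat.eq_of_mul_eq_mul_left hE (hi.symm.trans hj) <;> omega

theorem layerU_mulVec_apply_of_not_dvd {L ℓ : ℕ} (hℓ : ℓ < L) (α : ℕ → ℕ → ℝ)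
    (w : Fin (2 ^ L) → ℂ) {u : Fin (2 ^ L)} (hu : ¬ 2 ^ (L - (ℓ + 1)) ∣ (u : ℕ)) :
    (layerU L α (ℓ + 1) *ᵥ w) u = w u := by
  refine (ActsWithin.list_prod_ofFn fun i => actsWithin_UsubN _ _ _ _).mulVec_apply_of_notMem
    ?_ w
  simp only [Set.mem_iUnion, Set.mem_ofPred_eq, pIdx_succ hℓ, qIdx_succ hℓ, not_exists]
  rintro i (h | h) <;> exact hu ⟨_, h⟩

theorem layerU_mulVec_apply_of_mem {L ℓ : ℕ} (hℓ : ℓ < L) (α : ℕ → ℕ → ℝ)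
    (w : Fin (2 ^ L) → ℂ) {j : ℕ} (hj : j < 2 ^ ℓ) {u : Fin (2 ^ L)}
    (hu : (u : ℕ) = pIdx L (ℓ + 1) (j + 1) ∨ (u : ℕ) = qIdx L (ℓ + 1) (j + 1)) :
    (layerU L α (ℓ + 1) *ᵥ w) u =
      (UsubN (2 ^ L) (pIdx L (ℓ + 1) (j + 1)) (qIdx L (ℓ + 1) (j + 1)) (α (ℓ + 1) (j + 1)) *ᵥ w)
        u :=
  ActsWithin.list_prod_ofFn_mulVec_apply (j := ⟨j, by simpa using hj⟩)
    (fun i => actsWithin_UsubN _ _ _ _)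
    (fun _ _ h => disjoint_layer_supports hℓ (Fin.val_ne_of_ne h)) hu w

noncomputable def layerState (L : ℕ) (α : ℕ → ℕ → ℝ) : ℕ → Fin (2 ^ L) → ℂ
  | 0 => e1 (2 ^ L)
  | ℓ + 1 => layerU L α (ℓ + 1) *ᵥ layerState L α ℓ

theorem list_prod_layerU_mulVec_e1 (L : ℕ) (α : ℕ → ℕ → ℝ) (k : ℕ) :
    (List.ofFn fun ℓ : Fin k => layerU L α (k - ℓ)).prod *ᵥ e1 (2 ^ L) = layerState L α k := by
  induction k with
  | zero => exact one_mulVec _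
  | succ k ih =>
    rw [List.ofFn_succ, List.prod_cons, ← mulVec_mulVec]
    simp only [Fin.val_zero, Nat.sub_zero, Fin.val_succ, Nat.add_sub_add_right]
    rw [ih]
    rfl

theorem Vmag_mulVec_e1 (L : ℕ) (α : ℕ → ℕ → ℝ) : Vmag L α *ᵥ e1 (2 ^ L) = layerState L α L :=
  list_prod_layerU_mulVec_e1 L α L

structure IsTreeState (L : ℕ) (c : Fin (2 ^ L) → ℂ) (ℓ : ℕ) (v : Fin (2 ^ L) → ℂ) : Prop where
  norm_apply : ∀ (u : Fin (2 ^ L)) (j : ℕ), (u : ℕ) = 2 ^ (L - ℓ) * j →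
    ‖v u‖ = rnorm L c (ℓ + 1) (j + 1)
  apply_eq_zero : ∀ u : Fin (2 ^ L), ¬ 2 ^ (L - ℓ) ∣ (u : ℕ) → v u = 0

theorem isTreeState_e1 {L : ℕ} {c : Fin (2 ^ L) → ℂ} (hc : ∑ n, ‖c n‖ ^ 2 = 1) :
    IsTreeState L c 0 (e1 (2 ^ L)) where
  norm_apply u j hu := by
    obtain rfl : j = 0 := by
      have hu_lt := u.isLt
      rw [hu, Nat.sub_zero] at hu_lt
      exact Nat.lt_one_iff.1 (Nat.lt_of_mul_lt_mul_left (hu_lt.trans_eq (mul_one _).symm))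
    simp [e1, hu, rnorm_one_one hc]
  apply_eq_zero u hu := if_neg fun h => hu (by rw [h]; exact dvd_zero _)

namespace IsTreeState

variable {L ℓ : ℕ} {c : Fin (2 ^ L) → ℂ} {v : Fin (2 ^ L) → ℂ}

theorem leaf (hv : IsTreeState L c L v) (u : Fin (2 ^ L)) : ‖v u‖ = ‖c u‖ := by
  rw [hv.norm_apply u u (by simp), rnorm_leaf]

theorem norm_layerU_apply (hℓ : ℓ < L) (hv : IsTreeState L c ℓ v) {j : ℕ} (hj : j < 2 ^ ℓ)
    {p q : Fin (2 ^ L)} (hp : (p : ℕ) = pIdx L (ℓ + 1) (j + 1))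
    (hq : (q : ℕ) = qIdx L (ℓ + 1) (j + 1)) :
    ‖(layerU L (splitAngle L c) (ℓ + 1) *ᵥ v) p‖ = rnorm L c (ℓ + 2) (2 * j + 1) ∧
      ‖(layerU L (splitAngle L c) (ℓ + 1) *ᵥ v) q‖ = rnorm L c (ℓ + 2) (2 * j + 2) := by
  have hpq : p ≠ q := Fin.ne_of_val_ne (hp ▸ hq ▸ (pIdx_lt_qIdx _ _ _).ne)
  have hvp : ‖v p‖ = rnorm L c (ℓ + 1) (j + 1) :=
    hv.norm_apply p j (hp.trans (pIdx_succ_eq_two_pow_mul L ℓ j))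
  have hvq : v q = 0 := hv.apply_eq_zero q (hq ▸ not_two_pow_dvd_qIdx hℓ j)
  have hr := rnorm_nonneg L c (ℓ + 1) (j + 1)
  rw [layerU_mulVec_apply_of_mem hℓ _ v hj (Or.inl hp),
    layerU_mulVec_apply_of_mem hℓ _ v hj (Or.inr hq),
    UsubN_mulVec_apply_fst hp hq hpq, UsubN_mulVec_apply_snd hp hq hpq, hvq]
  simp only [mul_zero, add_zero, norm_mul, hvp, norm_I, one_mul, Complex.norm_real,
    Real.norm_eq_abs]
  rw [← abs_of_nonneg hr, ← abs_mul, ← abs_mul, mul_comm (Real.cos _), mul_comm (Real.sin _),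
    rnorm_mul_cos_splitAngle hℓ, rnorm_mul_sin_splitAngle hℓ]
  exact ⟨abs_of_nonneg (rnorm_nonneg ..), abs_of_nonneg (rnorm_nonneg ..)⟩

theorem mulVec_layerU (hℓ : ℓ < L) (hv : IsTreeState L c ℓ v) :
    IsTreeState L c (ℓ + 1) (layerU L (splitAngle L c) (ℓ + 1) *ᵥ v) where
  norm_apply u k hu := by
    have hk : k < 2 * 2 ^ ℓ := by
      have hu_lt := u.isLt
      rw [hu, two_pow_eq_mul hℓ] at hu_lt
      exact Nat.lt_of_mul_lt_mul_left hu_lt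
    obtain ⟨j, rfl | rfl⟩ : ∃ j, k = 2 * j ∨ k = 2 * j + 1 := ⟨k / 2, by omega⟩
    · have hj : j < 2 ^ ℓ := by omega
      exact (hv.norm_layerU_apply hℓ hj (q := ⟨_, qIdx_lt hℓ hj⟩)
        (hu.trans (pIdx_succ hℓ j).symm) rfl).1
    · have hj : j < 2 ^ ℓ := by omega
      exact (hv.norm_layerU_apply hℓ hj (p := ⟨_, (pIdx_lt_qIdx ..).trans (qIdx_lt hℓ hj)⟩)
        rfl (hu.trans (qIdx_succ hℓ j).symm)).2
  apply_eq_zero u hu := by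
    rw [layerU_mulVec_apply_of_not_dvd hℓ _ v hu]
    exact hv.apply_eq_zero u fun h => hu ((pow_dvd_pow 2 (by omega)).trans h)

end IsTreeState

theorem isTreeState_layerState {L : ℕ} {c : Fin (2 ^ L) → ℂ} (hc : ∑ n, ‖c n‖ ^ 2 = 1) :
    ∀ ℓ ≤ L, IsTreeState L c ℓ (layerState L (splitAngle L c) ℓ)
  | 0, _ => isTreeState_e1 hc
  | ℓ + 1, hℓ => (isTreeState_layerState hc ℓ (by omega)).mulVec_layerU hℓ

theorem magnitude_preservation_general (L : ℕ) (c : Fin (2 ^ L) → ℂ)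
    (hc : ∑ n, ‖c n‖ ^ 2 = 1) :
    ∀ n : Fin (2 ^ L),
      ‖(Vmag L (splitAngle L c)).mulVec (e1 (2 ^ L)) n‖ = ‖c n‖ := by
  intro n
  rw [Vmag_mulVec_e1]
  exact (isTreeState_layerState hc L le_rfl).leaf n

theorem magnitude_preservation (L : ℕ) (hL : 1 ≤ L) (c : Fin (2 ^ L) → ℂ)
    (hc : ∑ n, ‖c n‖ ^ 2 = 1) :
    ∀ n : Fin (2 ^ L),
      ‖(Vmag L (splitAngle L c)).mulVec (e1 (2 ^ L)) n‖ = ‖c n‖ :=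
  magnitude_preservation_general L c hc
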